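/- arXiv:1312.5450 — 3 statements merged into one kernel-verified Lean document; each statement's English description precedes it below -/
import Mathlib

section
/- In a spherical rhombus with all four sides of length d ∈ (0, π/2) and opposite angles equal, with angles u₁, u₂, u₁, u₂ in cyclic order, the relation cot(u₁/2)·cot(u₂/2) = cos d holds. -/
open Real
open scoped RealInnerProductSpace

/-- Angular (geodesic) distance between points of the unit sphere `S² ⊂ ℝ³`. -/
noncomputable def sphDist (x y : EuclideanSpace ℝ (Fin 3)) : ℝ :=
  Real.arccos ⟪x, y⟫

/-- The spherical angle at the vertex `v`, between the geodesic arcs from `v`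
towards `p` and towards `q`. -/
noncomputable def sphAngle (v p q : EuclideanSpace ℝ (Fin 3)) : ℝ :=
  InnerProductGeometry.angle (p - ⟪v, p⟫ • v) (q - ⟪v, q⟫ • v)

lemma aux_dep (u v w1 w2 : EuclideanSpace ℝ (Fin 3))
    (hu : u ≠ 0) (hv : v ≠ 0) (huv : ⟪u,v⟫ = 0)
    (h1 : ⟪u,w1⟫ = 0) (h2 : ⟪u,w2⟫ = 0) (h3 : ⟪v,w1⟫ = 0) (h4 : ⟪v,w2⟫ = 0) :
    ⟪w1,w2⟫^2 = ‖w1‖^2 * ‖w2‖^2 := by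
  have hdim : Module.finrank ℝ (EuclideanSpace ℝ (Fin 3)) = 3 := by
    simp [finrank_euclideanSpace]
  have hnotli : ¬ LinearIndependent ℝ ![u, v, w1, w2] := by
    intro h
    have := h.fintype_card_le_finrank
    rw [hdim] at this
    simp at this
  rw [Fintype.not_linearIndependent_iff] at hnotli
  obtain ⟨g, hsum, i, hgi⟩ := hnotli
  have hsum' : g 0 • u + g 1 • v + g 2 • w1 + g 3 • w2 = 0 := by
    have := hsum
    rw [Fin.sum_univ_four] at this
    simpa using this
  have hvu : ⟪v,u⟫ = (0:ℝ) := by rw [real_inner_comm]; exact huv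
  have hg0 : g 0 = 0 := by
    have h := congrArg (fun x => ⟪u, x⟫) hsum'
    simp only [inner_add_right, real_inner_smul_right, inner_zero_right] at h
    rw [huv, h1, h2, real_inner_self_eq_norm_sq] at h
    have hun : (0:ℝ) < ‖u‖^2 := pow_pos (norm_pos_iff.mpr hu) 2
    nlinarith [h]
  have hg1 : g 1 = 0 := by
    have h := congrArg (fun x => ⟪v, x⟫) hsum'
    simp only [inner_add_right, real_inner_smul_right, inner_zero_right] at h
    rw [hvu, h3, h4, real_inner_self_eq_norm_sq] at h
    have hvn : (0:ℝ) < ‖v‖^2 := pow_pos (norm_pos_iff.mpr hv) 2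
    nlinarith [h]
  rw [hg0, hg1] at hsum'
  simp only [zero_smul, zero_add] at hsum'
  have hkey : g 2 ≠ 0 ∨ g 3 ≠ 0 := by
    fin_cases i
    · exact absurd hg0 hgi
    · exact absurd hg1 hgi
    · exact Or.inl hgi
    · exact Or.inr hgi
  rcases hkey with hk | hk
  · have h' : g 2 • w1 = (-(g 3)) • w2 := by
      rw [neg_smul]; exact eq_neg_of_add_eq_zero_left hsum'
    have hw1 : w1 = ((-(g 3)) / g 2) • w2 := by
      calc w1 = (g 2)⁻¹ • (g 2 • w1) := by rw [smul_smul, inv_mul_cancel₀ hk, one_smul]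
      _ = ((-(g 3)) / g 2) • w2 := by rw [h', smul_smul]; congr 1; field_simp
    rw [hw1, real_inner_smul_left, norm_smul, real_inner_self_eq_norm_sq]
    simp only [mul_pow, Real.norm_eq_abs, sq_abs]
    ring
  · have h' : g 3 • w2 = (-(g 2)) • w1 := by
      rw [neg_smul]; exact eq_neg_of_add_eq_zero_right hsum'
    have hw2 : w2 = ((-(g 2)) / g 3) • w1 := by
      calc w2 = (g 3)⁻¹ • (g 3 • w2) := by rw [smul_smul, inv_mul_cancel₀ hk, one_smul]
      _ = ((-(g 2)) / g 3) • w1 := by rw [h', smul_smul]; congr 1; field_simp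
    rw [hw2, real_inner_smul_right, norm_smul, real_inner_self_eq_norm_sq]
    simp only [mul_pow, Real.norm_eq_abs, sq_abs]
    ring

lemma norm_proj_eq (X Y : EuclideanSpace ℝ (Fin 3)) (a : ℝ)
    (hXX : ⟪X,X⟫ = (1:ℝ)) (hXY : ⟪X,Y⟫ = a) (hYX : ⟪Y,X⟫ = a)
    (hYY : ⟪Y,Y⟫ = (1:ℝ)) :
    ‖Y - ⟪X,Y⟫ • X‖ = Real.sqrt (1 - a^2) := by
  rw [hXY, norm_eq_sqrt_real_inner]
  congr 1
  simp only [inner_sub_left, inner_sub_right, real_inner_smul_left,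
    real_inner_smul_right, hXX, hXY, hYX, hYY]
  ring

lemma proj_ne_zero (X Y : EuclideanSpace ℝ (Fin 3)) (a : ℝ) (ha : a^2 < 1)
    (hXX : ⟪X,X⟫ = (1:ℝ)) (hXY : ⟪X,Y⟫ = a) (hYX : ⟪Y,X⟫ = a)
    (hYY : ⟪Y,Y⟫ = (1:ℝ)) :
    Y - ⟪X,Y⟫ • X ≠ 0 := by
  intro h0
  have hn := norm_proj_eq X Y a hXX hXY hYX hYY
  rw [h0, norm_zero] at hn
  have : (0:ℝ) < Real.sqrt (1 - a^2) := Real.sqrt_pos.mpr (by linarith)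
  linarith [this, hn.symm.le]

lemma cos_sphAngle_eq (X Y Z : EuclideanSpace ℝ (Fin 3)) (a : ℝ) (ha : a^2 < 1)
    (hXX : ⟪X,X⟫ = (1:ℝ)) (hYY : ⟪Y,Y⟫ = (1:ℝ)) (hZZ : ⟪Z,Z⟫ = (1:ℝ))
    (hXY : ⟪X,Y⟫ = a) (hXZ : ⟪X,Z⟫ = a) :
    Real.cos (sphAngle X Y Z) = (⟪Y,Z⟫ - a^2) / (1 - a^2) := by
  have hYX : ⟪Y,X⟫ = a := by rw [real_inner_comm]; exact hXY
  have hZX : ⟪Z,X⟫ = a := by rw [real_inner_comm]; exact hXZ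
  have hinner : ⟪Y - ⟪X,Y⟫ • X, Z - ⟪X,Z⟫ • X⟫ = ⟪Y,Z⟫ - a^2 := by
    simp only [inner_sub_left, inner_sub_right, real_inner_smul_left,
      real_inner_smul_right, hXX, hXY, hXZ, hYX]
    ring
  have hn1 := norm_proj_eq X Y a hXX hXY hYX hYY
  have hn2 := norm_proj_eq X Z a hXX hXZ hZX hZZ
  rw [sphAngle, InnerProductGeometry.cos_angle, hinner, hn1, hn2,
    Real.mul_self_sqrt (by linarith : (0:ℝ) ≤ 1 - a^2)]


/-- In a convex spherical rhombus `A B C D` with all four sides of length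
`d ∈ (0, π/2)` and angles `u₁, u₂, u₁, u₂` in cyclic order, the relation
`cot (u₁/2) · cot (u₂/2) = cos d` holds.  Convexity is expressed by the
additivity of each vertex angle with respect to the opposite diagonal. -/
theorem spherical_rhombus_angle_relation
    (A B C D : EuclideanSpace ℝ (Fin 3)) (d u₁ u₂ : ℝ)
    (hA : ‖A‖ = 1) (hB : ‖B‖ = 1) (hC : ‖C‖ = 1) (hD : ‖D‖ = 1)
    (hd0 : 0 < d) (hd1 : d < π / 2)
    (hAB : sphDist A B = d) (hBC : sphDist B C = d)
    (hCD : sphDist C D = d) (hDA : sphDist D A = d)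
    (hu₁ : u₁ ∈ Set.Ioo 0 π) (hu₂ : u₂ ∈ Set.Ioo 0 π)
    (hangA : sphAngle A B D = u₁) (hangC : sphAngle C B D = u₁)
    (hangB : sphAngle B A C = u₂) (hangD : sphAngle D A C = u₂)
    (hconvA : sphAngle A B D = sphAngle A B C + sphAngle A C D)
    (hconvB : sphAngle B A C = sphAngle B A D + sphAngle B D C)
    (hconvC : sphAngle C B D = sphAngle C B A + sphAngle C A D)
    (hconvD : sphAngle D A C = sphAngle D A B + sphAngle D B C) :
    (Real.cos (u₁ / 2) / Real.sin (u₁ / 2)) *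
      (Real.cos (u₂ / 2) / Real.sin (u₂ / 2)) = Real.cos d := by
  obtain ⟨hu₁0, hu₁π⟩ := hu₁
  obtain ⟨hu₂0, hu₂π⟩ := hu₂
  have hπ := Real.pi_pos
  set a := Real.cos d with ha_def
  have ha0 : 0 < a := Real.cos_pos_of_mem_Ioo ⟨by linarith, hd1⟩
  have ha1 : a < 1 := by
    have h := Real.cos_lt_cos_of_nonneg_of_le_pi (le_refl 0) (by linarith) hd0
    simpa using h
  have ha2 : a^2 < 1 := by nlinarith
  -- all adjacent inner products equal a
  have hinner : ∀ X Y : EuclideanSpace ℝ (Fin 3), ‖X‖ = 1 → ‖Y‖ = 1 →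
      sphDist X Y = d → ⟪X,Y⟫ = a := by
    intro X Y hX hY h
    have hle := abs_real_inner_le_norm X Y
    rw [hX, hY, mul_one] at hle
    obtain ⟨hl, hr⟩ := abs_le.mp hle
    rw [ha_def, ← h]
    exact (Real.cos_arccos hl hr).symm
  have hAA : ⟪A,A⟫ = (1:ℝ) := by rw [real_inner_self_eq_norm_sq, hA]; norm_num
  have hBB : ⟪B,B⟫ = (1:ℝ) := by rw [real_inner_self_eq_norm_sq, hB]; norm_num
  have hCC : ⟪C,C⟫ = (1:ℝ) := by rw [real_inner_self_eq_norm_sq, hC]; norm_num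
  have hDD : ⟪D,D⟫ = (1:ℝ) := by rw [real_inner_self_eq_norm_sq, hD]; norm_num
  have hab : ⟪A,B⟫ = a := hinner A B hA hB hAB
  have hbc : ⟪B,C⟫ = a := hinner B C hB hC hBC
  have hcd : ⟪C,D⟫ = a := hinner C D hC hD hCD
  have hda : ⟪D,A⟫ = a := hinner D A hD hA hDA
  have hba : ⟪B,A⟫ = a := by rw [real_inner_comm]; exact hab
  have hcb : ⟪C,B⟫ = a := by rw [real_inner_comm]; exact hbc
  have hdc : ⟪D,C⟫ = a := by rw [real_inner_comm]; exact hcd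
  have had : ⟪A,D⟫ = a := by rw [real_inner_comm]; exact hda
  set p := ⟪A,C⟫ with hp_def
  set q := ⟪B,D⟫ with hq_def
  have hca : ⟪C,A⟫ = p := by rw [hp_def, real_inner_comm]
  have hdb : ⟪D,B⟫ = q := by rw [hq_def, real_inner_comm]
  -- cosines of the angles
  have hcosu₁ : Real.cos u₁ = (q - a^2) / (1 - a^2) := by
    rw [← hangA]; exact cos_sphAngle_eq A B D a ha2 hAA hBB hDD hab had
  have hcosu₂ : Real.cos u₂ = (p - a^2) / (1 - a^2) := by
    rw [← hangB]; exact cos_sphAngle_eq B A C a ha2 hBB hAA hCC hba hbc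
  -- nondegeneracy
  have hvne : B - D ≠ 0 := by
    intro h0
    have hBD : B = D := by rwa [sub_eq_zero] at h0
    have : sphAngle A B D = 0 := by
      rw [sphAngle, hBD]
      exact InnerProductGeometry.angle_self
        (proj_ne_zero A D a ha2 hAA had hda hDD)
    rw [hangA] at this; linarith
  have hune : A - C ≠ 0 := by
    intro h0
    have hAC : A = C := by rwa [sub_eq_zero] at h0
    have : sphAngle B A C = 0 := by
      rw [sphAngle, hAC]
      exact InnerProductGeometry.angle_self
        (proj_ne_zero B C a ha2 hBB hbc hcb hCC)
    rw [hangB] at this; linarith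
  -- orthogonality relations and the Gram identity
  have o1 : ⟪A - C, B - D⟫ = (0:ℝ) := by
    simp only [inner_sub_left, inner_sub_right, hab, had, hcb, hcd]; ring
  have o2 : ⟪A - C, A + C⟫ = (0:ℝ) := by
    simp only [inner_sub_left, inner_add_right, hAA, hCC, hca, hp_def]
    ring
  have o3 : ⟪A - C, B + D⟫ = (0:ℝ) := by
    simp only [inner_sub_left, inner_add_right, hab, had, hcb, hcd]; ring
  have o4 : ⟪B - D, A + C⟫ = (0:ℝ) := by
    simp only [inner_sub_left, inner_add_right, hba, hbc, hda, hdc]; ring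
  have o5 : ⟪B - D, B + D⟫ = (0:ℝ) := by
    simp only [inner_sub_left, inner_add_right, hBB, hDD, hdb, hq_def]
    ring
  have hGram := aux_dep (A - C) (B - D) (A + C) (B + D) hune hvne o1 o2 o3 o4 o5
  have hw1 : ⟪A + C, B + D⟫ = 4*a := by
    simp only [inner_add_left, inner_add_right, hab, had, hcb, hcd]; ring
  have hn1 : ‖A + C‖^2 = 2 + 2*p := by
    rw [← real_inner_self_eq_norm_sq]
    simp only [inner_add_left, inner_add_right, hAA, hCC, hca, hp_def]
    ring
  have hn2 : ‖B + D‖^2 = 2 + 2*q := by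
    rw [← real_inner_self_eq_norm_sq]
    simp only [inner_add_left, inner_add_right, hBB, hDD, hdb, hq_def]
    ring
  rw [hw1, hn1, hn2] at hGram
  have hG : (1 + p) * (1 + q) = 4 * a^2 := by linear_combination (-1/4 : ℝ) * hGram
  -- half-angle positivity
  have hc1 : 0 < Real.cos (u₁/2) :=
    Real.cos_pos_of_mem_Ioo ⟨by linarith, by linarith⟩
  have hc2 : 0 < Real.cos (u₂/2) :=
    Real.cos_pos_of_mem_Ioo ⟨by linarith, by linarith⟩
  have hs1 : 0 < Real.sin (u₁/2) :=
    Real.sin_pos_of_pos_of_lt_pi (by linarith) (by linarith)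
  have hs2 : 0 < Real.sin (u₂/2) :=
    Real.sin_pos_of_pos_of_lt_pi (by linarith) (by linarith)
  set c1 := Real.cos (u₁/2)
  set s1 := Real.sin (u₁/2)
  set c2 := Real.cos (u₂/2)
  set s2 := Real.sin (u₂/2)
  have hcu1 : Real.cos u₁ = 2*c1^2 - 1 := by
    have h := Real.cos_two_mul (u₁/2)
    rw [show 2*(u₁/2) = u₁ by ring] at h
    exact h
  have hcu2 : Real.cos u₂ = 2*c2^2 - 1 := by
    have h := Real.cos_two_mul (u₂/2)
    rw [show 2*(u₂/2) = u₂ by ring] at h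
    exact h
  have hsu1 : s1^2 = 1 - c1^2 := Real.sin_sq _
  have hsu2 : s2^2 = 1 - c2^2 := Real.sin_sq _
  have hkpos : (0:ℝ) < 1 - a^2 := sub_pos.mpr ha2
  have hk : (1:ℝ) - a^2 ≠ 0 := ne_of_gt hkpos
  have e1 : Real.cos u₁ * (1 - a^2) = q - a^2 := by
    rw [hcosu₁]; field_simp
  have e2 : Real.cos u₂ * (1 - a^2) = p - a^2 := by
    rw [hcosu₂]; field_simp
  set cu := Real.cos u₁
  set cv := Real.cos u₂
  have hmain : (1 + cu)*(1 + cv) = a^2*((1 - cu)*(1 - cv)) := by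
    have h2 : ((1 + cu)*(1 + cv) - a^2*((1 - cu)*(1 - cv))) * (1 - a^2)^2 = 0 := by
      linear_combination ((1-a^2+cv*(1-a^2)) + a^2*(1-a^2-cv*(1-a^2))) * e1 +
        ((1-a^2+(q-a^2)) + a^2*(1-a^2-(q-a^2))) * e2 + (1-a^2) * hG
    rcases mul_eq_zero.mp h2 with h3 | h3
    · linarith [h3]
    · exact absurd h3 (pow_ne_zero 2 hk)
  have hc1' : c1^2 = (1 + cu)/2 := by rw [hcu1]; ring
  have hs1' : s1^2 = (1 - cu)/2 := by rw [hsu1, hcu1]; ring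
  have hc2' : c2^2 = (1 + cv)/2 := by rw [hcu2]; ring
  have hs2' : s2^2 = (1 - cv)/2 := by rw [hsu2, hcu2]; ring
  have hsq : (c1*c2)^2 = (a*(s1*s2))^2 := by
    rw [mul_pow, mul_pow, mul_pow, hc1', hc2', hs1', hs2']
    linear_combination hmain/4
  rw [div_mul_div_comm, div_eq_iff (ne_of_gt (mul_pos hs1 hs2))]
  have hfac : (c1*c2 - a*(s1*s2)) * (c1*c2 + a*(s1*s2)) = 0 := by
    linear_combination hsq
  rcases mul_eq_zero.mp hfac with h3 | h3
  · linarith [h3]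
  · exfalso
    have p1 : 0 < c1*c2 := mul_pos hc1 hc2
    have p2 : 0 < a*(s1*s2) := mul_pos ha0 (mul_pos hs1 hs2)
    linarith [h3, p1, p2]
end

section
/- Let X be a finite set of points on the unit sphere S² and ψ(X) the minimum pairwise angular distance. If a, b, x, y ∈ X are four distinct points with dist(a,b) = dist(x,y) = ψ(X), then the minimal geodesic arcs ab and xy do not cross in their interiors. -/
open Real
open scoped RealInnerProductSpace

/-- `p` is an interior point of the minimal geodesic arc from `a` to `b`. -/
def InteriorOfArc (a b p : EuclideanSpace ℝ (Fin 3)) : Prop :=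
  ‖p‖ = 1 ∧ p ≠ a ∧ p ≠ b ∧ sphDist a p + sphDist p b = sphDist a b

open InnerProductGeometry

/-!
If `p` lies on both arcs, the four detours `a → p → x`, `a → p → y`, `b → p → x`, `b → p → y`
are each at least `ψ` long, by the triangle inequality and the minimality of `ψ`, while their
lengths add up to `(|ap| + |pb|) + (|xp| + |py|) = 2ψ` in two ways. Hence `p` is at distance
`ψ / 2` from all four points and `|ax| = ψ`. But a unit vector `q` with `|pq| = ψ / 2` and
`|aq| = ψ` is determined by the inner products it has with `a` and `p`: it is
`2 cos (ψ / 2) p - a`. Both `b` and `x` are such vectors, so `b = x`.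
-/

theorem add_eq_two_mul_smul_of_inner_eq {V : Type*} [NormedAddCommGroup V]
    [InnerProductSpace ℝ V] {a b p : V} {c : ℝ} (ha : ‖a‖ = 1) (hb : ‖b‖ = 1) (hp : ‖p‖ = 1)
    (hap : ⟪a, p⟫ = c) (hbp : ⟪b, p⟫ = c) (hab : ⟪a, b⟫ = 2 * c ^ 2 - 1) :
    a + b = (2 * c) • p := by
  rw [← sub_eq_zero, ← norm_eq_zero, ← sq_eq_zero_iff, ← real_inner_self_eq_norm_sq]
  have hpa : ⟪p, a⟫ = c := by rw [real_inner_comm, hap]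
  have hpb : ⟪p, b⟫ = c := by rw [real_inner_comm, hbp]
  have hba : ⟪b, a⟫ = 2 * c ^ 2 - 1 := by rw [real_inner_comm, hab]
  simp only [inner_sub_left, inner_sub_right, inner_add_left, inner_add_right,
    real_inner_smul_left, real_inner_smul_right, inner_self_eq_one_of_norm_eq_one ha,
    inner_self_eq_one_of_norm_eq_one hb, inner_self_eq_one_of_norm_eq_one hp,
    hap, hbp, hpa, hpb, hab, hba]
  ring

section UnitSphere

variable {x y z : EuclideanSpace ℝ (Fin 3)}

theorem sphDist_comm (x y : EuclideanSpace ℝ (Fin 3)) : sphDist x y = sphDist y x := by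
  rw [sphDist, sphDist, real_inner_comm]

theorem sphDist_eq_angle (hx : ‖x‖ = 1) (hy : ‖y‖ = 1) : sphDist x y = angle x y := by
  rw [sphDist, angle, hx, hy, mul_one, div_one]

theorem cos_sphDist (hx : ‖x‖ = 1) (hy : ‖y‖ = 1) : cos (sphDist x y) = ⟪x, y⟫ := by
  rw [sphDist_eq_angle hx hy, cos_angle, hx, hy, mul_one, div_one]

theorem sphDist_triangle (hx : ‖x‖ = 1) (hy : ‖y‖ = 1) (hz : ‖z‖ = 1) :
    sphDist x z ≤ sphDist x y + sphDist y z := by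
  rw [sphDist_eq_angle hx hz, sphDist_eq_angle hx hy, sphDist_eq_angle hy hz]
  exact angle_le_angle_add_angle x y z

theorem add_eq_two_cos_smul_of_sphDist_eq {r : ℝ} (hx : ‖x‖ = 1) (hy : ‖y‖ = 1)
    (hz : ‖z‖ = 1) (hxy : sphDist x y = r) (hyz : sphDist y z = r) (hxz : sphDist x z = 2 * r) :
    x + z = (2 * cos r) • y := by
  refine add_eq_two_mul_smul_of_inner_eq hx hz hy ?_ ?_ ?_
  · rw [← cos_sphDist hx hy, hxy]
  · rw [← cos_sphDist hz hy, sphDist_comm, hyz]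
  · rw [← cos_sphDist hx hz, hxz, cos_two_mul]

end UnitSphere

theorem minimal_arcs_do_not_cross_general
    (X : Finset (EuclideanSpace ℝ (Fin 3))) (ψ : ℝ)
    (hX : ∀ p ∈ X, ‖p‖ = 1)
    (hψ : ∀ p ∈ X, ∀ q ∈ X, p ≠ q → ψ ≤ sphDist p q)
    (a b x y : EuclideanSpace ℝ (Fin 3))
    (ha : a ∈ X) (hb : b ∈ X) (hx : x ∈ X) (hy : y ∈ X)
    (hab : sphDist a b = ψ) (hxy : sphDist x y = ψ)
    (h2 : a ≠ x) (h3 : a ≠ y) (h4 : b ≠ x) (h5 : b ≠ y) :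
    ¬ ∃ p : EuclideanSpace ℝ (Fin 3), InteriorOfArc a b p ∧ InteriorOfArc x y p := by
  rintro ⟨p, ⟨hp, -, -, hapb⟩, ⟨-, -, -, hxpy⟩⟩
  have detour {u v} (hu : u ∈ X) (hv : v ∈ X) (huv : u ≠ v) :
      ψ ≤ sphDist u v ∧ sphDist u v ≤ sphDist u p + sphDist p v :=
    ⟨hψ u hu v hv huv, sphDist_triangle (hX u hu) hp (hX v hv)⟩
  obtain ⟨hax_ge, hax_le⟩ := detour ha hx h2
  obtain ⟨hay_ge, hay_le⟩ := detour ha hy h3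
  obtain ⟨hbx_ge, hbx_le⟩ := detour hb hx h4
  obtain ⟨hby_ge, hby_le⟩ := detour hb hy h5
  have hbp := sphDist_comm b p
  have hxp := sphDist_comm x p
  have hap : sphDist a p = ψ / 2 := by linarith
  have hpb : sphDist p b = ψ / 2 := by linarith
  have hpx : sphDist p x = ψ / 2 := by linarith
  have hmid_ab := add_eq_two_cos_smul_of_sphDist_eq (hX a ha) hp (hX b hb) hap hpb
    (by linarith)
  have hmid_ax := add_eq_two_cos_smul_of_sphDist_eq (hX a ha) hp (hX x hx) hap hpx
    (by linarith)
  exact h4 (add_left_cancel (hmid_ab.trans hmid_ax.symm))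

/-- Let `X` be a finite set of points on the unit sphere with minimum pairwise
angular distance `ψ`.  If `a, b, x, y ∈ X` are four distinct points with
`dist(a,b) = dist(x,y) = ψ`, then the minimal geodesic arcs `ab` and `xy`
do not cross in their interiors. -/
theorem minimal_arcs_do_not_cross
    (X : Finset (EuclideanSpace ℝ (Fin 3))) (ψ : ℝ)
    (hX : ∀ p ∈ X, ‖p‖ = 1)
    (hψ : ∀ p ∈ X, ∀ q ∈ X, p ≠ q → ψ ≤ sphDist p q)
    (a b x y : EuclideanSpace ℝ (Fin 3))
    (ha : a ∈ X) (hb : b ∈ X) (hx : x ∈ X) (hy : y ∈ X)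
    (hab : sphDist a b = ψ) (hxy : sphDist x y = ψ)
    (h1 : a ≠ b) (h2 : a ≠ x) (h3 : a ≠ y) (h4 : b ≠ x) (h5 : b ≠ y)
    (h6 : x ≠ y) :
    ¬ ∃ p : EuclideanSpace ℝ (Fin 3), InteriorOfArc a b p ∧ InteriorOfArc x y p :=
  minimal_arcs_do_not_cross_general X ψ hX hψ a b x y ha hb hx hy hab hxy h2 h3 h4 h5
end

section
/- The angle between two geodesic arcs at a common vertex v ∈ S², going to points x and y with dist(v,x) = dist(v,y) = dist(x,y) = d ∈ (0, π/2), is at least arccos(cos d/(1+cos d)); moreover if dist(x,y) ≥ d while dist(v,x) = dist(v,y) = d, the angle at v is at least arccos(cos d/(1+cos d)). -/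
open Real
open scoped RealInnerProductSpace

lemma arccos_antitone : Antitone Real.arccos := fun a b h => by
  simp only [Real.arccos_eq_pi_div_two_sub_arcsin]
  linarith [Real.monotone_arcsin h]

/-- The angle between two geodesic arcs at a common vertex `v ∈ S²`, going to
points `x` and `y` with `dist(v,x) = dist(v,y) = dist(x,y) = d ∈ (0, π/2)`, is
at least `arccos (cos d/(1+cos d))`; moreover if `dist(x,y) ≥ d` while
`dist(v,x) = dist(v,y) = d`, the angle at `v` is at least
`arccos (cos d/(1+cos d))`. -/
theorem angle_at_vertex_ge_alpha
    (v x y : EuclideanSpace ℝ (Fin 3)) (d : ℝ)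
    (hv : ‖v‖ = 1) (hx : ‖x‖ = 1) (hy : ‖y‖ = 1)
    (hd0 : 0 < d) (hd1 : d < π / 2)
    (hvx : sphDist v x = d) (hvy : sphDist v y = d) :
    (sphDist x y = d → Real.arccos (Real.cos d / (1 + Real.cos d)) ≤ sphAngle v x y) ∧
    (d ≤ sphDist x y → Real.arccos (Real.cos d / (1 + Real.cos d)) ≤ sphAngle v x y) := by
  have key : d ≤ sphDist x y → Real.arccos (Real.cos d / (1 + Real.cos d)) ≤ sphAngle v x y := by
    intro hxy
    set c := Real.cos d with hcdef
    have habs : ∀ a b : EuclideanSpace ℝ (Fin 3), ‖a‖ = 1 → ‖b‖ = 1 → |⟪a, b⟫| ≤ 1 := by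
      intro a b ha hb
      calc |⟪a, b⟫| ≤ ‖a‖ * ‖b‖ := abs_real_inner_le_norm a b
        _ = 1 := by rw [ha, hb, one_mul]
    have hvx1 := habs v x hv hx
    have hvy1 := habs v y hv hy
    have hxy1 := habs x y hx hy
    have hc : ⟪v, x⟫ = c := by
      rw [hcdef, ← hvx, sphDist, Real.cos_arccos (neg_le_of_abs_le hvx1) (le_of_abs_le hvx1)]
    have hc' : ⟪v, y⟫ = c := by
      rw [hcdef, ← hvy, sphDist, Real.cos_arccos (neg_le_of_abs_le hvy1) (le_of_abs_le hvy1)]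
    have hcpos : 0 < c := Real.cos_pos_of_mem_Ioo ⟨by linarith [Real.pi_pos], hd1⟩
    have hclt : c < 1 := by
      have := Real.cos_lt_cos_of_nonneg_of_le_pi (le_refl 0) (by linarith [Real.pi_pos]) hd0
      simpa using this
    -- inner x y ≤ c
    set t := ⟪x, y⟫ with htdef
    have htle : t ≤ c := by
      have h1 : Real.cos (sphDist x y) ≤ Real.cos d :=
        Real.cos_le_cos_of_nonneg_of_le_pi hd0.le (Real.arccos_le_pi _) hxy
      rwa [sphDist, Real.cos_arccos (neg_le_of_abs_le hxy1) (le_of_abs_le hxy1)] at h1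
    have htge : -1 ≤ t := neg_le_of_abs_le hxy1
    -- compute the angle
    have hvv : ⟪v, v⟫ = 1 := by
      rw [real_inner_self_eq_norm_sq, hv]; norm_num
    have hinner : ⟪x - ⟪v, x⟫ • v, y - ⟪v, y⟫ • v⟫ = t - c ^ 2 := by
      rw [hc, hc']
      have hxv : ⟪x, v⟫ = c := by rw [real_inner_comm]; exact hc
      simp only [inner_sub_left, inner_sub_right, real_inner_smul_left, real_inner_smul_right,
        hvv, hxv, hc', ← htdef]
      ring
    have hnormsq : ∀ a : EuclideanSpace ℝ (Fin 3), ‖a‖ = 1 → ⟪v, a⟫ = c →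
        ‖a - ⟪v, a⟫ • v‖ = Real.sqrt (1 - c ^ 2) := by
      intro a ha hca
      rw [← Real.sqrt_sq (norm_nonneg (a - ⟪v, a⟫ • v))]
      congr 1
      have hav : ⟪a, v⟫ = c := by rw [real_inner_comm]; exact hca
      rw [← real_inner_self_eq_norm_sq]
      rw [inner_sub_left, inner_sub_right, inner_sub_right, real_inner_smul_left,
        real_inner_smul_left, real_inner_smul_right, real_inner_smul_right, hvv,
        hav, hca, real_inner_self_eq_norm_sq, ha]
      ring
    have hnx := hnormsq x hx hc
    have hny := hnormsq y hy hc'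
    have h1c : 0 < 1 - c ^ 2 := by nlinarith
    have hprod : ‖x - ⟪v, x⟫ • v‖ * ‖y - ⟪v, y⟫ • v‖ = 1 - c ^ 2 := by
      rw [hnx, hny, Real.mul_self_sqrt h1c.le]
    rw [sphAngle, InnerProductGeometry.angle, hinner, hprod]
    apply arccos_antitone
    rw [div_le_div_iff₀ h1c (by linarith : (0:ℝ) < 1 + c)]
    nlinarith
  exact ⟨fun h => key (le_of_eq h.symm), key⟩
end
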